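/- The timed step simulation preorder is a precongruence for restriction under a side condition: let T₁ and T₂ be comparable TTSBs with T₁ ≼ T₂, and let C ⊆ Δ ∪ 𝒞 ∪ E₁. If for every committed state r of T₁ there exists an action a ∈ Act − {δ?, c!, c? | δ ∈ C ∩ Δ, c ∈ C ∩ 𝒞} such that r →^{a,1} in T₁, then T₁\C ≼ T₂\C. -/

import Mathlib

open Classical

noncomputable section

namespace TTSBpaper

/-! ### Partial functions / valuations -/

/-- The domain of a partial function. -/
def dom {α β : Type*} (f : α → Option β) : Set α := {x | f x ≠ none}

/-- The override operator. -/
def override {α β : Type*} (f g : α → Option β) : α → Option β :=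
  fun x => if x ∈ dom f then f x else g x

/-- Restriction of a partial function to a set. -/
def restrictV {α β : Type*} (f : α → Option β) (X : Set α) : α → Option β :=
  fun x => if x ∈ X then f x else none

/-- Compatibility of partial functions. -/
def compatV {α β : Type*} (f g : α → Option β) : Prop :=
  ∀ x ∈ dom f ∩ dom g, f x = g x

/-- Update of f according to g. -/
def updV {α β : Type*} (f g : α → Option β) : α → Option β :=
  restrictV (override g f) (dom f)

/-- A property P (a set of valuations over V) does not depend on the variables in W. -/
def indep {α β : Type*} (V W : Set α) (P : Set (α → Option β)) : Prop :=
  ∀ v u, dom v = V → dom u = W → (v ∈ P ↔ updV v u ∈ P)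

variable {Var Data BCh CCh : Type}

/-- Values: nonnegative reals for clocks, plus arbitrary data. -/
abbrev Value (Data : Type) : Type := NNReal ⊕ Data

/-- Valuations over a universal set of variables, as partial functions. -/
abbrev Valn (Var Data : Type) : Type := Var → Option (Value Data)

/-- Singleton valuation. -/
def single (x : Var) (v : Value Data) : Valn Var Data :=
  fun y => if y = x then some v else none

/-- Time shift v ⊕ d : all clocks (variables in X) advance by d. -/
def oplus (X : Set Var) (v : Valn Var Data) (d : NNReal) : Valn Var Data :=
  fun y => if y ∈ X then (v y).map (Sum.map (fun r => r + d) id) else v y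

/-- A property is left-closed w.r.t. time passage. -/
def leftClosed (X : Set Var) (P : Set (Valn Var Data)) : Prop :=
  ∀ v d, oplus X v d ∈ P → v ∈ P

/-! ### Actions -/

/-- Actions: broadcast output/input, binary output/input, internal, and time passage. -/
inductive Act (BCh CCh : Type) : Type where
  | bsend : BCh → Act BCh CCh
  | brecv : BCh → Act BCh CCh
  | send : CCh → Act BCh CCh
  | recv : CCh → Act BCh CCh
  | tau : Act BCh CCh
  | delay : NNReal → Act BCh CCh

/-- Binary actions. -/
def Act.isBinary : Act BCh CCh → Prop
  | .send _ => True
  | .recv _ => True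
  | _ => False

/-- Binary or broadcast actions. -/
def Act.isSync : Act BCh CCh → Prop
  | .send _ => True
  | .recv _ => True
  | .bsend _ => True
  | .brecv _ => True
  | _ => False

/-- Actions removed by restriction to channel sets Cb, Cc. -/
def Act.removedBy (Cb : Set BCh) (Cc : Set CCh) : Act BCh CCh → Prop
  | .brecv d => d ∈ Cb
  | .send c => c ∈ Cc
  | .recv c => c ∈ Cc
  | _ => False

/-- Actions whose label is kept unchanged by restriction to channel sets Cb, Cc. -/
def Act.keptBy (Cb : Set BCh) (Cc : Set CCh) : Act BCh CCh → Prop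
  | .bsend d => d ∉ Cb
  | .brecv d => d ∉ Cb
  | .send c => c ∉ Cc
  | .recv c => c ∉ Cc
  | _ => True

/-! ### Timed transition systems with broadcast actions -/

/-- The data of a TTSB: external/internal variables, states, initial state and
committed (`true`) / uncommitted (`false`) transition relations. -/
structure PreTTSB (Var Data BCh CCh : Type) : Type where
  E : Set Var
  H : Set Var
  S : Set (Valn Var Data)
  init : Valn Var Data
  Tr : Bool → Valn Var Data → Act BCh CCh → Valn Var Data → Prop

/-- The variables of a TTSB. -/
def PreTTSB.V (T : PreTTSB Var Data BCh CCh) : Set Var := T.E ∪ T.H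

/-- A state is committed iff some committed transition starts in it. -/
def PreTTSB.Comm (T : PreTTSB Var Data BCh CCh) (s : Valn Var Data) : Prop :=
  ∃ a t, T.Tr true s a t

/-- `T` is a timed transition system with broadcast actions (with clock set `X`):
well-formedness plus Axioms I–VI of the paper. -/
structure IsTTSB (X : Set Var) (T : PreTTSB Var Data BCh CCh) : Prop where
  disjEH : Disjoint T.E T.H
  statesDom : ∀ s ∈ T.S, dom s = T.V
  initMem : T.init ∈ T.S
  trMem : ∀ {b s a t}, T.Tr b s a t → s ∈ T.S ∧ t ∈ T.S
  trDisj : ∀ s a t, ¬ (T.Tr true s a t ∧ T.Tr false s a t)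
  axI : ∀ {s a t b a' t'}, T.Tr true s a t → T.Tr b s a' t' →
      a'.isSync ∨ (a' = Act.tau ∧ b = true)
  axII : ∀ {s} (u : Valn Var Data), s ∈ T.S → dom u = T.E → updV s u ∈ T.S
  axIIIc : ∀ {b s t} (u : Valn Var Data) (c : CCh), dom u = T.E →
      T.Tr b s (Act.recv c) t → ∃ t', T.Tr b (updV s u) (Act.recv c) t'
  axIIIb : ∀ {b s t} (u : Valn Var Data) (d : BCh), dom u = T.E →
      T.Tr b s (Act.brecv d) t → ∃ t', T.Tr b (updV s u) (Act.brecv d) t'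
  axIV : ∀ {s d t}, T.Tr false s (Act.delay d) t → t = oplus X s d
  axV : ∀ (d : BCh), ∀ s ∈ T.S, ∃ b t, T.Tr b s (Act.brecv d) t
  axVI : ∀ {b s t} (d : BCh), T.Tr b s (Act.brecv d) t →
      restrictV s T.E = restrictV t T.E

/-- Compatibility of two TTSBs. -/
def Compatible (T1 T2 : PreTTSB Var Data BCh CCh) : Prop :=
  T1.H ∩ T2.V = ∅ ∧ T2.H ∩ T1.V = ∅ ∧ compatV T1.init T2.init

/-- Comparability of two TTSBs. -/
def Comparable (T1 T2 : PreTTSB Var Data BCh CCh) : Prop := T1.E = T2.E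

/-- The transition relations of the parallel composition of two TTSBs
(rules EXT, TAU, SYNC, TIME, SND, RCV of the paper, in both directions). -/
inductive ParTr (T1 T2 : PreTTSB Var Data BCh CCh) :
    Bool → Valn Var Data → Act BCh CCh → Valn Var Data → Prop where
  | ext₁ {r s r' : Valn Var Data} {a : Act BCh CCh} {b : Bool}
      (hr : r ∈ T1.S) (hs : s ∈ T2.S) (hc : compatV r s)
      (ha : a.isBinary) (ht : T1.Tr b r a r') :
      ParTr T1 T2 b (override r s) a (override r' s)
  | ext₂ {r s s' : Valn Var Data} {a : Act BCh CCh} {b : Bool}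
      (hr : r ∈ T1.S) (hs : s ∈ T2.S) (hc : compatV r s)
      (ha : a.isBinary) (ht : T2.Tr b s a s') :
      ParTr T1 T2 b (override r s) a (override s' r)
  | tau₁ {r s r' : Valn Var Data} {b : Bool}
      (hr : r ∈ T1.S) (hs : s ∈ T2.S) (hc : compatV r s)
      (ht : T1.Tr b r Act.tau r') (hcm : T2.Comm s → b = true) :
      ParTr T1 T2 b (override r s) Act.tau (override r' s)
  | tau₂ {r s s' : Valn Var Data} {b : Bool}
      (hr : r ∈ T1.S) (hs : s ∈ T2.S) (hc : compatV r s)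
      (ht : T2.Tr b s Act.tau s') (hcm : T1.Comm r → b = true) :
      ParTr T1 T2 b (override r s) Act.tau (override s' r)
  | sync₁ {r s r' s' : Valn Var Data} {c : CCh} {b b' : Bool}
      (hr : r ∈ T1.S) (hs : s ∈ T2.S) (hc : compatV r s)
      (ht1 : T1.Tr b r (Act.send c) r') (ht2 : T2.Tr b' (updV s r') (Act.recv c) s')
      (hcm : (T1.Comm r ∨ T2.Comm s) → (b || b') = true) :
      ParTr T1 T2 (b || b') (override r s) Act.tau (override s' r')
  | sync₂ {r s r' s' : Valn Var Data} {c : CCh} {b b' : Bool}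
      (hr : r ∈ T1.S) (hs : s ∈ T2.S) (hc : compatV r s)
      (ht1 : T2.Tr b s (Act.send c) s') (ht2 : T1.Tr b' (updV r s') (Act.recv c) r')
      (hcm : (T2.Comm s ∨ T1.Comm r) → (b || b') = true) :
      ParTr T1 T2 (b || b') (override r s) Act.tau (override r' s')
  | time₁ {r s r' s' : Valn Var Data} {d : NNReal}
      (hr : r ∈ T1.S) (hs : s ∈ T2.S) (hc : compatV r s)
      (ht1 : T1.Tr false r (Act.delay d) r') (ht2 : T2.Tr false s (Act.delay d) s') :
      ParTr T1 T2 false (override r s) (Act.delay d) (override r' s')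
  | time₂ {r s r' s' : Valn Var Data} {d : NNReal}
      (hr : r ∈ T1.S) (hs : s ∈ T2.S) (hc : compatV r s)
      (ht1 : T2.Tr false s (Act.delay d) s') (ht2 : T1.Tr false r (Act.delay d) r') :
      ParTr T1 T2 false (override r s) (Act.delay d) (override s' r')
  | snd₁ {r s r' s' : Valn Var Data} {δ : BCh} {b b' : Bool}
      (hr : r ∈ T1.S) (hs : s ∈ T2.S) (hc : compatV r s)
      (ht1 : T1.Tr b r (Act.bsend δ) r') (ht2 : T2.Tr b' (updV s r') (Act.brecv δ) s') :
      ParTr T1 T2 (b || b') (override r s) (Act.bsend δ) (override r' s')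
  | snd₂ {r s r' s' : Valn Var Data} {δ : BCh} {b b' : Bool}
      (hr : r ∈ T1.S) (hs : s ∈ T2.S) (hc : compatV r s)
      (ht1 : T2.Tr b s (Act.bsend δ) s') (ht2 : T1.Tr b' (updV r s') (Act.brecv δ) r') :
      ParTr T1 T2 (b || b') (override r s) (Act.bsend δ) (override s' r')
  | rcv₁ {r s r' s' : Valn Var Data} {δ : BCh} {b b' : Bool}
      (hr : r ∈ T1.S) (hs : s ∈ T2.S) (hc : compatV r s)
      (ht1 : T1.Tr b r (Act.brecv δ) r') (ht2 : T2.Tr b' s (Act.brecv δ) s') :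
      ParTr T1 T2 (b || b') (override r s) (Act.brecv δ) (override r' s')
  | rcv₂ {r s r' s' : Valn Var Data} {δ : BCh} {b b' : Bool}
      (hr : r ∈ T1.S) (hs : s ∈ T2.S) (hc : compatV r s)
      (ht1 : T2.Tr b s (Act.brecv δ) s') (ht2 : T1.Tr b' r (Act.brecv δ) r') :
      ParTr T1 T2 (b || b') (override r s) (Act.brecv δ) (override s' r')

/-- Parallel composition of TTSBs. -/
def par (T1 T2 : PreTTSB Var Data BCh CCh) : PreTTSB Var Data BCh CCh where
  E := T1.E ∪ T2.E
  H := T1.H ∪ T2.H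
  S := {v | ∃ r ∈ T1.S, ∃ s ∈ T2.S, compatV r s ∧ v = override r s}
  init := override T1.init T2.init
  Tr := ParTr T1 T2

/-- n-ary (left-associated) parallel composition. -/
def parAll (T : PreTTSB Var Data BCh CCh) (Ts : List (PreTTSB Var Data BCh CCh)) :
    PreTTSB Var Data BCh CCh :=
  Ts.foldl par T

/-- The restriction operator on TTSBs: channels in Cb/Cc and external variables in Ce
are internalized, following Definition 10 of the paper. -/
def restr (T : PreTTSB Var Data BCh CCh) (Cb : Set BCh) (Cc : Set CCh) (Ce : Set Var) :
    PreTTSB Var Data BCh CCh where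
  E := T.E \ Ce
  H := T.H ∪ (T.E ∩ Ce)
  S := T.S
  init := T.init
  Tr := fun b s a t =>
    (T.Tr b s a t ∧ Act.keptBy Cb Cc a) ∨
    (a = Act.tau ∧ ∃ δ ∈ Cb, T.Tr b s (Act.bsend δ) t ∧ (T.Comm s → b = true))

/-- Broadcast channels enabled in the transitions of T. -/
def enabledB (T : PreTTSB Var Data BCh CCh) : Set BCh :=
  {δ | ∃ b s t, T.Tr b s (Act.bsend δ) t ∨ T.Tr b s (Act.brecv δ) t}

/-- Binary channels enabled in the transitions of T. -/
def enabledC (T : PreTTSB Var Data BCh CCh) : Set CCh :=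
  {c | ∃ b s t, T.Tr b s (Act.send c) t ∨ T.Tr b s (Act.recv c) t}

/-! ### Timed step simulation -/

/-- R is a timed step simulation from T1 to T2 (Definition 11 of the paper). -/
structure IsTimedStepSim (T1 T2 : PreTTSB Var Data BCh CCh)
    (R : Valn Var Data → Valn Var Data → Prop) : Prop where
  mem : ∀ {r s}, R r s → r ∈ T1.S ∧ s ∈ T2.S
  initR : R T1.init T2.init
  extEq : ∀ {r s}, R r s → restrictV r T1.E = restrictV s T2.E
  updR : ∀ {r s} (u : Valn Var Data), R r s → dom u = T1.E → R (updV r u) (updV s u)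
  commR : ∀ {r s}, R r s → T2.Comm s → T1.Comm r
  stepR : ∀ {r s b a r'}, R r s → T1.Tr b r a r' →
      (∃ s', T2.Tr b s a s' ∧ R r' s') ∨ (a = Act.tau ∧ R r' s)

/-- T1 ≼ T2 : some timed step simulation from T1 to T2 exists. -/
def simLE (T1 T2 : PreTTSB Var Data BCh CCh) : Prop :=
  ∃ R, IsTimedStepSim T1 T2 R

/-! ### Timed automata -/

/-- Edge labels of timed automata (actions without time passage). -/
inductive ELab (BCh CCh : Type) : Type where
  | bsend : BCh → ELab BCh CCh
  | brecv : BCh → ELab BCh CCh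
  | send : CCh → ELab BCh CCh
  | recv : CCh → ELab BCh CCh
  | tau : ELab BCh CCh

/-- Edge labels as actions. -/
def ELab.toAct : ELab BCh CCh → Act BCh CCh
  | .bsend δ => .bsend δ
  | .brecv δ => .brecv δ
  | .send c => .send c
  | .recv c => .recv c
  | .tau => .tau

/-- A timed automaton: locations (a set of data values), committed locations, initial
location, external/internal variables, initial valuation, invariants, transitions
(location, guard, action, update function, location) and urgent transitions. -/
structure TA (Var Data BCh CCh : Type) : Type where
  L : Set Data
  K : Set Data
  l0 : Data
  E : Set Var
  H : Set Var
  v0 : Valn Var Data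
  Inv : Data → Set (Valn Var Data)
  Tr : Data → Set (Valn Var Data) → ELab BCh CCh →
      (Valn Var Data → Valn Var Data) → Data → Prop
  UTr : Data → Set (Valn Var Data) → ELab BCh CCh →
      (Valn Var Data → Valn Var Data) → Data → Prop

/-- The variables of a timed automaton. -/
def TA.V (A : TA Var Data BCh CCh) : Set Var := A.E ∪ A.H

/-- Well-formedness of a timed automaton, together with Axioms VII–XI of the paper
(clock set X). -/
structure TAok (X : Set Var) (A : TA Var Data BCh CCh) : Prop where
  disjEH : Disjoint A.E A.H
  l0mem : A.l0 ∈ A.L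
  Ksub : A.K ⊆ A.L
  v0dom : dom A.v0 = A.V
  v0inv : restrictV A.v0 A.V ∈ A.Inv A.l0
  invLC : ∀ l, leftClosed X (A.Inv l)
  urgSub : ∀ {l g a ρ l'}, A.UTr l g a ρ l' → A.Tr l g a ρ l'
  trLoc : ∀ {l g a ρ l'}, A.Tr l g a ρ l' → l ∈ A.L ∧ l' ∈ A.L
  updDom : ∀ {l g a ρ l'}, A.Tr l g a ρ l' → ∀ v, dom v = A.V → dom (ρ v) = A.V
  axVII : ∀ l, indep A.V A.E (A.Inv l)
  axVIIIc : ∀ {l g ρ l'} (c : CCh), A.Tr l g (ELab.recv c) ρ l' → indep A.V A.E g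
  axVIIIb : ∀ {l g ρ l'} (δ : BCh), A.Tr l g (ELab.brecv δ) ρ l' → indep A.V A.E g
  axIX : ∀ {l}, l ∈ A.K → ∀ v, dom v = A.V → v ∈ A.Inv l →
      ∃ g a ρ l', A.Tr l g a ρ l' ∧ v ∈ g ∧ ρ v ∈ A.Inv l'
  axX : ∀ {l g a ρ l'}, A.UTr l g a ρ l' → a = ELab.tau ∧ indep A.V (A.V ∩ X) g
  axXI : ∀ {l g ρ l'} (δ : BCh), A.Tr l g (ELab.brecv δ) ρ l' →
      ∀ v, restrictV (ρ v) A.E = restrictV v A.E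

/-- States of the TTSB associated to a TA with location variable ℓ. -/
def taState (A : TA Var Data BCh CCh) (ℓ : Var) : Set (Valn Var Data) :=
  {v | dom v = A.V ∪ {ℓ} ∧
    ∃ l ∈ A.L, v ℓ = some (Sum.inr l) ∧ restrictV v A.V ∈ A.Inv l}

/-- Application of an update function ρ : Val(V) → Val(V) to a larger state. -/
def applyU (A : TA Var Data BCh CCh) (ρ : Valn Var Data → Valn Var Data)
    (s : Valn Var Data) : Valn Var Data :=
  updV s (ρ (restrictV s A.V))

/-- The transition relations of the TTSB associated to a TA
(rules ACT, TIME and VIRT of the paper). -/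
inductive TATrans (X : Set Var) (A : TA Var Data BCh CCh) (ℓ : Var) :
    Bool → Valn Var Data → Act BCh CCh → Valn Var Data → Prop where
  | act {s : Valn Var Data} {l : Data} {g : Set (Valn Var Data)} {a : ELab BCh CCh}
      {ρ : Valn Var Data → Valn Var Data} {l' : Data} {b : Bool}
      (hs : s ∈ taState A ℓ) (hl : s ℓ = some (Sum.inr l))
      (ht : A.Tr l g a ρ l') (hg : restrictV s A.V ∈ g)
      (hb : b = true ↔ l ∈ A.K)
      (hs' : updV (applyU A ρ s) (single ℓ (Sum.inr l')) ∈ taState A ℓ) :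
      TATrans X A ℓ b s a.toAct (updV (applyU A ρ s) (single ℓ (Sum.inr l')))
  | time {s : Valn Var Data} {l : Data} {d : NNReal}
      (hs : s ∈ taState A ℓ) (hl : s ℓ = some (Sum.inr l)) (hK : l ∉ A.K)
      (hs' : oplus X s d ∈ taState A ℓ)
      (hurg : ∀ d' : NNReal, d' ≤ d → ∀ g ρ l', A.UTr l g ELab.tau ρ l' →
          restrictV (oplus X s d') A.V ∉ g) :
      TATrans X A ℓ false s (Act.delay d) (oplus X s d)
  | virt {s : Valn Var Data} {l : Data} (δ : BCh)
      (hs : s ∈ taState A ℓ) (hl : s ℓ = some (Sum.inr l))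
      (hno : ∀ g ρ l', A.Tr l g (ELab.brecv δ) ρ l' → restrictV s A.V ∉ g) :
      TATrans X A ℓ false s (Act.brecv δ) s

/-- The TTSB associated to a timed automaton. -/
def TTSBof (X : Set Var) (A : TA Var Data BCh CCh) (ℓ : Var) :
    PreTTSB Var Data BCh CCh where
  E := A.E
  H := A.H ∪ {ℓ}
  S := taState A ℓ
  init := override A.v0 (single ℓ (Sum.inr A.l0))
  Tr := TATrans X A ℓ

/-! ### Networks of timed automata and their non-compositional semantics -/

/-- A network component: a timed automaton together with its (fresh) location variable. -/
abbrev Comp (Var Data BCh CCh : Type) : Type := TA Var Data BCh CCh × Var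

/-- The variables of a component, including its location variable. -/
def compW (c : Comp Var Data BCh CCh) : Set Var := c.1.V ∪ {c.2}

/-- The TTSB associated to a component. -/
def TTSBofC (X : Set Var) (c : Comp Var Data BCh CCh) : PreTTSB Var Data BCh CCh :=
  TTSBof X c.1 c.2

/-- All variables of a network. -/
def NTAvars (N : List (Comp Var Data BCh CCh)) : Set Var :=
  {x | ∃ c ∈ N, x ∈ compW c}

/-- The states of the non-compositional (UPPAAL) semantics of a network. -/
def NTAstates (N : List (Comp Var Data BCh CCh)) : Set (Valn Var Data) :=
  {v | dom v = NTAvars N ∧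
    ∀ c ∈ N, ∃ l ∈ c.1.L, v c.2 = some (Sum.inr l) ∧ restrictV v c.1.V ∈ c.1.Inv l}

/-- The initial state of the non-compositional semantics of a network. -/
def NTAinit (N : List (Comp Var Data BCh CCh)) : Valn Var Data :=
  N.foldr (fun c w => override (override c.1.v0 (single c.2 (Sum.inr c.1.l0))) w)
    (fun _ => none)

/-- A component is in a committed location at state s. -/
def atCommitted (c : Comp Var Data BCh CCh) (s : Valn Var Data) : Prop :=
  ∃ l ∈ c.1.K, s c.2 = some (Sum.inr l)

/-- No component of the network is in a committed location. -/
def noneCommitted (N : List (Comp Var Data BCh CCh)) (s : Valn Var Data) : Prop :=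
  ∀ c ∈ N, ¬ atCommitted c s

/-- Application of a component update function to a network state. -/
def applyC (c : Comp Var Data BCh CCh) (ρ : Valn Var Data → Valn Var Data)
    (s : Valn Var Data) : Valn Var Data :=
  updV s (ρ (restrictV s c.1.V))

/-- j ∈ RS(δ, i, s): component j (≠ i) has an executable δ?-transition in s. -/
def RSmem (N : List (Comp Var Data BCh CCh)) (δ : BCh) (i : ℕ) (s : Valn Var Data)
    (j : ℕ) : Prop :=
  j ≠ i ∧ ∃ (hj : j < N.length), ∃ l g ρ l',
    s (N.get ⟨j, hj⟩).2 = some (Sum.inr l) ∧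
    (N.get ⟨j, hj⟩).1.Tr l g (ELab.brecv δ) ρ l' ∧
    restrictV s (N.get ⟨j, hj⟩).1.V ∈ g

/-- Apply the chosen receiver updates in index order (left-to-right). -/
def bcastUpds (N : List (Comp Var Data BCh CCh)) (δ : BCh) (i : ℕ) (s0 : Valn Var Data)
    (ρs : ℕ → Valn Var Data → Valn Var Data) (v : Valn Var Data) : Valn Var Data :=
  (List.range N.length).foldl
    (fun w j =>
      if hj : j < N.length then
        if RSmem N δ i s0 j then applyC (N.get ⟨j, hj⟩) (ρs j) w else w
      else w) v

/-- Update the location variables of all receivers. -/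
def bcastLocs (N : List (Comp Var Data BCh CCh)) (δ : BCh) (i : ℕ) (s0 : Valn Var Data)
    (ls' : ℕ → Data) (v : Valn Var Data) : Valn Var Data :=
  (List.range N.length).foldl
    (fun w j =>
      if hj : j < N.length then
        if RSmem N δ i s0 j then
          updV w (single (N.get ⟨j, hj⟩).2 (Sum.inr (ls' j)))
        else w
      else w) v

/-- The non-compositional (UPPAAL) transition relation of a network
(rules TAU, SYNC, TIME and BCST of the paper). -/
inductive NTATr (X : Set Var) (N : List (Comp Var Data BCh CCh)) :
    Valn Var Data → Act BCh CCh → Valn Var Data → Prop where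
  | tau {s : Valn Var Data} {i : ℕ} (hi : i < N.length)
      {l : Data} {g : Set (Valn Var Data)} {ρ : Valn Var Data → Valn Var Data} {l' : Data}
      (hs : s ∈ NTAstates N)
      (hl : s (N.get ⟨i, hi⟩).2 = some (Sum.inr l))
      (ht : (N.get ⟨i, hi⟩).1.Tr l g ELab.tau ρ l')
      (hg : restrictV s (N.get ⟨i, hi⟩).1.V ∈ g)
      (hcomm : noneCommitted N s ∨ l ∈ (N.get ⟨i, hi⟩).1.K)
      (hs' : updV (applyC (N.get ⟨i, hi⟩) ρ s)
          (single (N.get ⟨i, hi⟩).2 (Sum.inr l')) ∈ NTAstates N) :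
      NTATr X N s Act.tau
        (updV (applyC (N.get ⟨i, hi⟩) ρ s) (single (N.get ⟨i, hi⟩).2 (Sum.inr l')))
  | sync {s : Valn Var Data} {i j : ℕ} (hi : i < N.length) (hj : j < N.length)
      (hij : i ≠ j) {li lj li' lj' : Data} {gi gj : Set (Valn Var Data)}
      {ρi ρj : Valn Var Data → Valn Var Data} {c : CCh}
      (hs : s ∈ NTAstates N)
      (hli : s (N.get ⟨i, hi⟩).2 = some (Sum.inr li))
      (hlj : s (N.get ⟨j, hj⟩).2 = some (Sum.inr lj))
      (hti : (N.get ⟨i, hi⟩).1.Tr li gi (ELab.send c) ρi li')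
      (htj : (N.get ⟨j, hj⟩).1.Tr lj gj (ELab.recv c) ρj lj')
      (hgi : restrictV s (N.get ⟨i, hi⟩).1.V ∈ gi)
      (hgj : restrictV s (N.get ⟨j, hj⟩).1.V ∈ gj)
      (hcomm : noneCommitted N s ∨ li ∈ (N.get ⟨i, hi⟩).1.K ∨ lj ∈ (N.get ⟨j, hj⟩).1.K)
      (hs' : updV (updV (applyC (N.get ⟨j, hj⟩) ρj (applyC (N.get ⟨i, hi⟩) ρi s))
          (single (N.get ⟨i, hi⟩).2 (Sum.inr li')))
          (single (N.get ⟨j, hj⟩).2 (Sum.inr lj')) ∈ NTAstates N) :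
      NTATr X N s Act.tau
        (updV (updV (applyC (N.get ⟨j, hj⟩) ρj (applyC (N.get ⟨i, hi⟩) ρi s))
          (single (N.get ⟨i, hi⟩).2 (Sum.inr li')))
          (single (N.get ⟨j, hj⟩).2 (Sum.inr lj')))
  | time {s : Valn Var Data} {d : NNReal}
      (hs : s ∈ NTAstates N) (hs' : oplus X s d ∈ NTAstates N)
      (hK : noneCommitted N s)
      (hurg : ¬ ∃ (i : ℕ) (hi : i < N.length), ∃ l g ρ l',
          (N.get ⟨i, hi⟩).1.UTr l g ELab.tau ρ l' ∧
          s (N.get ⟨i, hi⟩).2 = some (Sum.inr l) ∧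
          restrictV s (N.get ⟨i, hi⟩).1.V ∈ g) :
      NTATr X N s (Act.delay d) (oplus X s d)
  | bcst {s : Valn Var Data} {i : ℕ} (hi : i < N.length)
      {l l' : Data} {g : Set (Valn Var Data)} {ρ : Valn Var Data → Valn Var Data}
      {δ : BCh} (ρs : ℕ → Valn Var Data → Valn Var Data) (ls' : ℕ → Data)
      (hs : s ∈ NTAstates N)
      (hl : s (N.get ⟨i, hi⟩).2 = some (Sum.inr l))
      (ht : (N.get ⟨i, hi⟩).1.Tr l g (ELab.bsend δ) ρ l')
      (hg : restrictV s (N.get ⟨i, hi⟩).1.V ∈ g)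
      (hrecv : ∀ j (hj : j < N.length), RSmem N δ i s j →
          ∃ lj gj, s (N.get ⟨j, hj⟩).2 = some (Sum.inr lj) ∧
            (N.get ⟨j, hj⟩).1.Tr lj gj (ELab.brecv δ) (ρs j) (ls' j) ∧
            restrictV s (N.get ⟨j, hj⟩).1.V ∈ gj)
      (hcomm : noneCommitted N s ∨ l ∈ (N.get ⟨i, hi⟩).1.K ∨
          ∃ j, ∃ (hj : j < N.length), RSmem N δ i s j ∧
            ∃ lj ∈ (N.get ⟨j, hj⟩).1.K, s (N.get ⟨j, hj⟩).2 = some (Sum.inr lj))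
      (hs' : bcastLocs N δ i s ls'
          (updV (bcastUpds N δ i s ρs (applyC (N.get ⟨i, hi⟩) ρ s))
            (single (N.get ⟨i, hi⟩).2 (Sum.inr l'))) ∈ NTAstates N) :
      NTATr X N s Act.tau
        (bcastLocs N δ i s ls'
          (updV (bcastUpds N δ i s ρs (applyC (N.get ⟨i, hi⟩) ρ s))
            (single (N.get ⟨i, hi⟩).2 (Sum.inr l'))))

/-- Well-formedness of a network: components satisfy Axioms VII–XI, are pairwise
compatible, and the location variables are fresh and pairwise distinct. -/
def NTAok (X : Set Var) (N : List (Comp Var Data BCh CCh)) : Prop :=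
  (∀ c ∈ N, TAok X c.1) ∧
  N.Pairwise (fun c c' => c.1.H ∩ c'.1.V = ∅ ∧ c'.1.H ∩ c.1.V = ∅ ∧
    compatV c.1.v0 c'.1.v0) ∧
  (∀ c ∈ N, ∀ c' ∈ N, c.2 ∉ c'.1.V) ∧
  N.Pairwise (fun c c' => c.2 ≠ c'.2)

/-- Reachability in the non-compositional semantics of a network. -/
def Reach (X : Set Var) (N : List (Comp Var Data BCh CCh)) (s : Valn Var Data) : Prop :=
  Relation.ReflTransGen (fun u v => ∃ a, NTATr X N u a v) (NTAinit N) s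

/-!
The simulation `R` witnessing `T1 ≼ T2` itself witnesses `restr T1 ≼ restr T2`. Restriction only
hides labels, so steps transfer directly, and a hidden broadcast of `T1` whose commitment flag is
admissible stays admissible in `T2` because `R` reflects commitment. An update of the smaller
external set `E \ Ce` is extended to an update of `E` by the current values on `Ce`, which related
states share. Finally, the side condition says that a committed state of `T1` keeps a committed
transition after restriction, which is what reflecting commitment requires.
-/

section Valuation

variable {α β : Type*}

theorem apply_eq_of_restrictV_eq {f g : α → Option β} {X : Set α}
    (h : restrictV f X = restrictV g X) {x : α} (hx : x ∈ X) : f x = g x := by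
  simpa [restrictV, hx] using congrFun h x

theorem restrictV_eq_of_subset {f g : α → Option β} {X Y : Set α}
    (h : restrictV f X = restrictV g X) (hYX : Y ⊆ X) : restrictV f Y = restrictV g Y := by
  funext x
  by_cases hx : x ∈ Y
  · simpa only [restrictV, hx, if_true] using apply_eq_of_restrictV_eq h (hYX hx)
  · simp only [restrictV, hx, if_false]

theorem dom_override (f g : α → Option β) : dom (override f g) = dom f ∪ dom g := by
  ext x
  by_cases hx : x ∈ dom f <;> simp_all [dom, override]

theorem dom_restrictV (f : α → Option β) (X : Set α) : dom (restrictV f X) = dom f ∩ X := by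
  ext x
  by_cases hx : x ∈ X <;> simp [dom, restrictV, hx]

theorem override_override_restrictV {u f g : α → Option β} {C : Set α}
    (h : ∀ x ∈ C, f x = g x) : override (override u (restrictV f C)) g = override u g := by
  funext x
  by_cases hu : x ∈ dom u
  · have hu' : x ∈ dom (override u (restrictV f C)) := by
      rw [dom_override]; exact Or.inl hu
    simp only [override, hu, hu', if_true]
  · by_cases hC : x ∈ C <;> simp_all [override, restrictV, dom]

theorem updV_override_restrictV {u f g : α → Option β} {C : Set α}
    (h : ∀ x ∈ C, f x = g x) : updV g (override u (restrictV f C)) = updV g u := by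
  simp only [updV, override_override_restrictV h]

end Valuation

section Restriction

variable {T T1 T2 : PreTTSB Var Data BCh CCh} {Cb : Set BCh} {Cc : Set CCh} {Ce : Set Var}

theorem PreTTSB.comm_of_restr_comm {s : Valn Var Data} (h : (restr T Cb Cc Ce).Comm s) :
    T.Comm s := by
  obtain ⟨a, t, ⟨ht, -⟩ | ⟨-, δ, -, ht, -⟩⟩ := h
  exacts [⟨a, t, ht⟩, ⟨_, t, ht⟩]

theorem PreTTSB.restr_comm_of_tr {r r' : Valn Var Data} {a : Act BCh CCh}
    (ht : T.Tr true r a r') (ha : ¬ a.removedBy Cb Cc) : (restr T Cb Cc Ce).Comm r := by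
  cases a with
  | bsend δ =>
    by_cases hδ : δ ∈ Cb
    · exact ⟨.tau, r', Or.inr ⟨rfl, δ, hδ, ht, fun _ => rfl⟩⟩
    · exact ⟨_, r', Or.inl ⟨ht, hδ⟩⟩
  | tau | delay _ => exact ⟨_, r', Or.inl ⟨ht, trivial⟩⟩
  | brecv _ | send _ | recv _ => exact ⟨_, r', Or.inl ⟨ht, ha⟩⟩

namespace IsTimedStepSim

variable {R : Valn Var Data → Valn Var Data → Prop} {r s : Valn Var Data}

theorem restrictV_eq (hR : IsTimedStepSim T1 T2 R) (hE : T1.E = T2.E) (h : R r s) :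
    restrictV r T1.E = restrictV s T1.E := by
  simpa only [hE] using hR.extEq h

theorem restr_extEq (hR : IsTimedStepSim T1 T2 R) (hE : T1.E = T2.E) (h : R r s) :
    restrictV r (restr T1 Cb Cc Ce).E = restrictV s (restr T2 Cb Cc Ce).E := by
  show restrictV r (T1.E \ Ce) = restrictV s (T2.E \ Ce)
  rw [← hE]
  exact restrictV_eq_of_subset (hR.restrictV_eq hE h) Set.sdiff_subset

theorem restr_updR (hR : IsTimedStepSim T1 T2 R) (hE : T1.E = T2.E) (hCe : Ce ⊆ T1.E)
    (hdom : ∀ r ∈ T1.S, Ce ⊆ dom r) (u : Valn Var Data) (h : R r s)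
    (hu : dom u = (restr T1 Cb Cc Ce).E) : R (updV r u) (updV s u) := by
  have hu' : dom (override u (restrictV r Ce)) = T1.E := by
    rw [dom_override, dom_restrictV, hu, Set.inter_eq_right.2 (hdom r (hR.mem h).1)]
    exact Set.sdiff_union_of_subset hCe
  have hrs : ∀ x ∈ Ce, r x = s x := fun x hx =>
    apply_eq_of_restrictV_eq (hR.restrictV_eq hE h) (hCe hx)
  have := hR.updR _ h hu'
  rwa [updV_override_restrictV (fun _ _ => rfl), updV_override_restrictV hrs] at this

theorem restr_commR (hR : IsTimedStepSim T1 T2 R)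
    (hside : ∀ r ∈ T1.S, T1.Comm r → ∃ a r', T1.Tr true r a r' ∧ ¬ Act.removedBy Cb Cc a)
    (h : R r s) (hs : (restr T2 Cb Cc Ce).Comm s) : (restr T1 Cb Cc Ce).Comm r := by
  obtain ⟨a, r', ht, ha⟩ :=
    hside r (hR.mem h).1 (hR.commR h (PreTTSB.comm_of_restr_comm hs))
  exact PreTTSB.restr_comm_of_tr ht ha

theorem restr_stepR (hR : IsTimedStepSim T1 T2 R) {b : Bool} {a : Act BCh CCh}
    {r' : Valn Var Data} (h : R r s) (ht : (restr T1 Cb Cc Ce).Tr b r a r') :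
    (∃ s', (restr T2 Cb Cc Ce).Tr b s a s' ∧ R r' s') ∨ (a = Act.tau ∧ R r' s) := by
  obtain ⟨ht, hk⟩ | ⟨rfl, δ, hδ, ht, hb⟩ := ht
  · exact (hR.stepR h ht).imp (fun ⟨s', hs', h'⟩ => ⟨s', Or.inl ⟨hs', hk⟩, h'⟩) id
  · obtain ⟨s', hs', h'⟩ | ⟨hne, -⟩ := hR.stepR h ht
    · exact Or.inl ⟨s', Or.inr ⟨rfl, δ, hδ, hs', fun hc => hb (hR.commR h hc)⟩, h'⟩
    · cases hne

theorem restr (hR : IsTimedStepSim T1 T2 R) (hE : T1.E = T2.E) (hCe : Ce ⊆ T1.E)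
    (hdom : ∀ r ∈ T1.S, Ce ⊆ dom r)
    (hside : ∀ r ∈ T1.S, T1.Comm r → ∃ a r', T1.Tr true r a r' ∧ ¬ Act.removedBy Cb Cc a) :
    IsTimedStepSim (restr T1 Cb Cc Ce) (restr T2 Cb Cc Ce) R where
  mem := hR.mem
  initR := hR.initR
  extEq := hR.restr_extEq hE
  updR := hR.restr_updR hE hCe hdom
  commR := hR.restr_commR hside
  stepR := hR.restr_stepR

end IsTimedStepSim

end Restriction

theorem simLE_restr_precongruence_general (X : Set Var) (T1 T2 : PreTTSB Var Data BCh CCh)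
    (h1 : IsTTSB X T1)
    (hcmp : Comparable T1 T2) (hle : simLE T1 T2)
    (Cb : Set BCh) (Cc : Set CCh) (Ce : Set Var) (hCe : Ce ⊆ T1.E)
    (hside : ∀ r ∈ T1.S, T1.Comm r →
        ∃ a r', T1.Tr true r a r' ∧ ¬ Act.removedBy Cb Cc a) :
    simLE (restr T1 Cb Cc Ce) (restr T2 Cb Cc Ce) := by
  obtain ⟨R, hR⟩ := hle
  have hdom : ∀ r ∈ T1.S, Ce ⊆ dom r := fun r hr => by
    rw [h1.statesDom r hr]
    exact hCe.trans Set.subset_union_left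
  exact ⟨R, hR.restr hcmp hCe hdom hside⟩

/-- Theorem 4: the timed step simulation preorder is a precongruence for
restriction, under the side condition that every committed state of T1 has an
outgoing committed transition whose label is not removed by the restriction. -/
theorem simLE_restr_precongruence (X : Set Var) (T1 T2 : PreTTSB Var Data BCh CCh)
    (h1 : IsTTSB X T1) (h2 : IsTTSB X T2)
    (hcmp : Comparable T1 T2) (hle : simLE T1 T2)
    (Cb : Set BCh) (Cc : Set CCh) (Ce : Set Var) (hCe : Ce ⊆ T1.E)
    (hside : ∀ r ∈ T1.S, T1.Comm r →
        ∃ a r', T1.Tr true r a r' ∧ ¬ Act.removedBy Cb Cc a) :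
    simLE (restr T1 Cb Cc Ce) (restr T2 Cb Cc Ce) :=
  simLE_restr_precongruence_general X T1 T2 h1 hcmp hle Cb Cc Ce hCe hside

end TTSBpaper
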